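/- arXiv:2306.06532 — 2 statements merged into one kernel-verified Lean document; each statement's English description precedes it below -/
import Mathlib

section
/- Let M N : ℕ be positive, and let J₁ : Matrix (Fin M) (Fin M) ℝ and J₂ : Matrix (Fin N) (Fin N) ℝ be negative semidefinite, i.e. (-J₁).PosSemidef and (-J₂).PosSemidef. Then J₁ ⊞ J₂ is negative semidefinite, and 0 is an eigenvalue of J₁ ⊞ J₂ of multiplicity 1 (i.e. Module.finrank ℝ (LinearMap.ker (Matrix.mulVecLin (J₁ ⊞ J₂))) = 1) if and only if 0 is an eigenvalue of multiplicity 1 of both J₁ and J₂ (i.e. Module.finrank ℝ (LinearMap.ker (Matrix.mulVecLin J₁)) = 1 and Module.finrank ℝ (LinearMap.ker (Matrix.mulVecLin J₂)) = 1). -/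
/-!
Diagonalize orthogonally `-J₁ = U D Uᵀ` and `-J₂ = V E Vᵀ` with `D, E ≥ 0`. Then `U ⊗ V`
conjugates `-(J₁ ⊞ J₂) = (-J₁) ⊞ (-J₂)` to the diagonal matrix with entries `D l + E i`, and a
sum of two nonnegative reals vanishes exactly when both do. Hence
`dim ker (J₁ ⊞ J₂) = dim ker J₁ * dim ker J₂`, which is `1` iff both factors are `1`.
Semidefiniteness comes from `J₁ ⊞ J₂ = J₁ ⊗ I + I ⊗ J₂`.
-/

/-- The Kronecker sum `A ⊞ B = A ⊗ I_N + I_M ⊗ B` of two square matrices. -/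
def kronSum {M N : ℕ} (A : Matrix (Fin M) (Fin M) ℝ) (B : Matrix (Fin N) (Fin N) ℝ) :
    Matrix (Fin M × Fin N) (Fin M × Fin N) ℝ :=
  fun p q => (if p.2 = q.2 then A p.1 q.1 else 0) + (if p.1 = q.1 then B p.2 q.2 else 0)

open Matrix Module LinearMap
open scoped Kronecker

namespace Matrix

variable {m n K : Type*} [Fintype n] [Field K]

theorem ker_mulVecLin_neg (A : Matrix m n K) : ker (-A).mulVecLin = ker A.mulVecLin := by
  ext x; simp

theorem finrank_ker_mulVecLin_add_rank (A : Matrix m n K) :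
    finrank K (ker A.mulVecLin) + A.rank = Fintype.card n := by
  rw [add_comm, rank, finrank_range_add_finrank_ker, finrank_fintype_fun_eq_card]

variable [DecidableEq n]

theorem finrank_ker_mulVecLin_diagonal [DecidableEq K] (d : n → K) :
    finrank K (ker (diagonal d).mulVecLin) = Fintype.card {i // d i = 0} := by
  have h := finrank_ker_mulVecLin_add_rank (diagonal d)
  rw [rank_diagonal, Fintype.card_subtype_compl] at h
  have := Fintype.card_subtype_le fun i => d i = 0
  omega

theorem finrank_ker_mulVecLin_unitary_conj [StarRing K] {U : Matrix n n K}
    (hU : U ∈ unitaryGroup n K) (A : Matrix n n K) :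
    finrank K (ker (U * A * star U).mulVecLin) = finrank K (ker A.mulVecLin) := by
  have h₁ := finrank_ker_mulVecLin_add_rank (U * A * star U)
  have h₂ := finrank_ker_mulVecLin_add_rank A
  rw [rank_mul_eq_left_of_isUnit_det _ _ (UnitaryGroup.det_isUnit ⟨_, Unitary.star_mem hU⟩),
    rank_mul_eq_right_of_isUnit_det _ _ (UnitaryGroup.det_isUnit ⟨U, hU⟩)] at h₁
  omega

theorem PosSemidef.exists_unitary_conj_diagonal {A : Matrix n n ℝ} (hA : A.PosSemidef) :
    ∃ U ∈ unitaryGroup n ℝ, ∃ d : n → ℝ, 0 ≤ d ∧ A = U * diagonal d * star U := by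
  refine ⟨_, hA.isHermitian.eigenvectorUnitary.2, _, fun i => hA.eigenvalues_nonneg i, ?_⟩
  conv_lhs => rw [hA.isHermitian.spectral_theorem]
  simp

end Matrix

section KroneckerSum

variable {M N : ℕ}

theorem kronSum_eq_kronecker_add (A : Matrix (Fin M) (Fin M) ℝ) (B : Matrix (Fin N) (Fin N) ℝ) :
    kronSum A B = A ⊗ₖ 1 + 1 ⊗ₖ B := by
  ext p q
  simp [kronSum, kroneckerMap_apply, one_apply]

theorem kronSum_neg_neg (A : Matrix (Fin M) (Fin M) ℝ) (B : Matrix (Fin N) (Fin N) ℝ) :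
    kronSum (-A) (-B) = -kronSum A B := by
  ext p q
  simp only [Matrix.neg_apply, kronSum]
  split_ifs <;> ring

theorem Matrix.PosSemidef.kronSum {A : Matrix (Fin M) (Fin M) ℝ} {B : Matrix (Fin N) (Fin N) ℝ}
    (hA : A.PosSemidef) (hB : B.PosSemidef) : (kronSum A B).PosSemidef := by
  rw [kronSum_eq_kronecker_add]
  exact (hA.kronecker PosSemidef.one).add (PosSemidef.one.kronecker hB)

theorem kronSum_diagonal (d : Fin M → ℝ) (e : Fin N → ℝ) :
    kronSum (diagonal d) (diagonal e) = diagonal fun p => d p.1 + e p.2 := by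
  ext ⟨l, i⟩ ⟨k, j⟩
  by_cases hlk : l = k <;> by_cases hij : i = j <;> simp [kronSum, hlk, hij]

theorem kronSum_unitary_conj {U : Matrix (Fin M) (Fin M) ℝ} {V : Matrix (Fin N) (Fin N) ℝ}
    (hU : U ∈ unitaryGroup (Fin M) ℝ) (hV : V ∈ unitaryGroup (Fin N) ℝ)
    (A : Matrix (Fin M) (Fin M) ℝ) (B : Matrix (Fin N) (Fin N) ℝ) :
    kronSum (U * A * star U) (V * B * star V) = (U ⊗ₖ V) * kronSum A B * star (U ⊗ₖ V) := by
  simp only [kronSum_eq_kronecker_add, mul_add, add_mul, star_eq_conjTranspose,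
    conjTranspose_kronecker, ← mul_kronecker_mul, mul_one]
  rw [← star_eq_conjTranspose, ← star_eq_conjTranspose, Unitary.mul_star_self_of_mem hU,
    Unitary.mul_star_self_of_mem hV]

theorem card_subtype_add_eq_zero_of_nonneg {ι κ : Type*} [Fintype ι] [Fintype κ]
    {d : ι → ℝ} {e : κ → ℝ} (hd : 0 ≤ d) (he : 0 ≤ e) :
    Fintype.card {p : ι × κ // d p.1 + e p.2 = 0} =
      Fintype.card {i // d i = 0} * Fintype.card {j // e j = 0} := by
  rw [← Fintype.card_prod]
  exact Fintype.card_congr <|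
    (Equiv.subtypeEquivRight fun p => add_eq_zero_iff_of_nonneg (hd p.1) (he p.2)).trans
      (Equiv.subtypeProdEquivProd (p := fun i => d i = 0) (q := fun j => e j = 0))

theorem finrank_ker_mulVecLin_kronSum {A : Matrix (Fin M) (Fin M) ℝ}
    {B : Matrix (Fin N) (Fin N) ℝ} (hA : A.PosSemidef) (hB : B.PosSemidef) :
    finrank ℝ (ker (kronSum A B).mulVecLin) =
      finrank ℝ (ker A.mulVecLin) * finrank ℝ (ker B.mulVecLin) := by
  obtain ⟨U, hU, d, hd, rfl⟩ := hA.exists_unitary_conj_diagonal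
  obtain ⟨V, hV, e, he, rfl⟩ := hB.exists_unitary_conj_diagonal
  rw [kronSum_unitary_conj hU hV, kronSum_diagonal,
    finrank_ker_mulVecLin_unitary_conj (kronecker_mem_unitary hU hV),
    finrank_ker_mulVecLin_unitary_conj hU, finrank_ker_mulVecLin_unitary_conj hV,
    finrank_ker_mulVecLin_diagonal, finrank_ker_mulVecLin_diagonal, finrank_ker_mulVecLin_diagonal]
  exact card_subtype_add_eq_zero_of_nonneg hd he

end KroneckerSum

theorem kronSum_negSemidef_and_simple_zero_iff_general
    (M N : ℕ)
    (J₁ : Matrix (Fin M) (Fin M) ℝ) (J₂ : Matrix (Fin N) (Fin N) ℝ)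
    (hJ₁ : (-J₁).PosSemidef) (hJ₂ : (-J₂).PosSemidef) :
    (-(kronSum J₁ J₂)).PosSemidef ∧
      (Module.finrank ℝ (LinearMap.ker (Matrix.mulVecLin (kronSum J₁ J₂))) = 1 ↔
        (Module.finrank ℝ (LinearMap.ker (Matrix.mulVecLin J₁)) = 1 ∧
          Module.finrank ℝ (LinearMap.ker (Matrix.mulVecLin J₂)) = 1)) := by
  refine ⟨kronSum_neg_neg J₁ J₂ ▸ hJ₁.kronSum hJ₂, ?_⟩
  rw [← ker_mulVecLin_neg (kronSum J₁ J₂), ← kronSum_neg_neg,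
    finrank_ker_mulVecLin_kronSum hJ₁ hJ₂, ker_mulVecLin_neg, ker_mulVecLin_neg]
  exact mul_eq_one

theorem kronSum_negSemidef_and_simple_zero_iff
    (M N : ℕ) (hM : 0 < M) (hN : 0 < N)
    (J₁ : Matrix (Fin M) (Fin M) ℝ) (J₂ : Matrix (Fin N) (Fin N) ℝ)
    (hJ₁ : (-J₁).PosSemidef) (hJ₂ : (-J₂).PosSemidef) :
    (-(kronSum J₁ J₂)).PosSemidef ∧
      (Module.finrank ℝ (LinearMap.ker (Matrix.mulVecLin (kronSum J₁ J₂))) = 1 ↔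
        (Module.finrank ℝ (LinearMap.ker (Matrix.mulVecLin J₁)) = 1 ∧
          Module.finrank ℝ (LinearMap.ker (Matrix.mulVecLin J₂)) = 1)) :=
  kronSum_negSemidef_and_simple_zero_iff_general M N J₁ J₂ hJ₁ hJ₂
end

section
/- Let M N : ℕ be positive, A : Matrix (Fin M) (Fin M) ℝ and B : Matrix (Fin N) (Fin N) ℝ be symmetric, φ* : Fin M → ℝ, ψ* : Fin N → ℝ, and define θ* : Fin M × Fin N → ℝ by θ* (l, i) = φ* l + ψ* i. Let hA, hB, hAB be the proofs that J_A(φ*), J_B(ψ*), and J_{A ⊞ B}(θ*) are Hermitian (symmetric). Then the multiset of eigenvalues (with multiplicity) of the multiplex Jacobian J_{A ⊞ B}(θ*) equals the multiset of all pairwise sums of the eigenvalues of J_A(φ*) and J_B(ψ*): Finset.univ.val.map (hAB.eigenvalues) = Finset.univ.val.map (fun p : Fin M × Fin N => hA.eigenvalues p.1 + hB.eigenvalues p.2). -/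
/-- The Kuramoto Jacobian of the coupling matrix `C` at the state `θ`. -/
noncomputable def kuraJac {ι : Type*} [Fintype ι] [DecidableEq ι]
    (C : Matrix ι ι ℝ) (θ : ι → ℝ) : Matrix ι ι ℝ :=
  fun i j =>
    if i = j then -∑ k ∈ Finset.univ \ {i}, C i k * Real.cos (θ k - θ i)
    else C i j * Real.cos (θ j - θ i)

open Matrix Polynomial Kronecker

namespace Matrix

variable {R 𝕜 ι κ : Type*} [DecidableEq ι] [DecidableEq κ]

lemma diagonal_kronecker_one_add_one_kronecker_diagonal [Semiring R] (d : ι → R) (e : κ → R) :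
    diagonal d ⊗ₖ (1 : Matrix κ κ R) + (1 : Matrix ι ι R) ⊗ₖ diagonal e =
      diagonal fun p => d p.1 + e p.2 := by
  rw [← diagonal_one, ← diagonal_one, diagonal_kronecker_diagonal, diagonal_kronecker_diagonal,
    diagonal_add]
  simp

variable [Fintype ι] [Fintype κ]

lemma sum_kronecker_one_add_one_kronecker_apply [Semiring R] (A : Matrix ι ι R)
    (B : Matrix κ κ R) (p : ι × κ) :
    ∑ q, (A ⊗ₖ (1 : Matrix κ κ R) + (1 : Matrix ι ι R) ⊗ₖ B) p q =
      ∑ k, A p.1 k + ∑ j, B p.2 j := by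
  simp [Fintype.sum_prod_type, one_apply, Finset.sum_add_distrib]

lemma IsHermitian.charpoly_kronecker_one_add_one_kronecker [RCLike 𝕜] {A : Matrix ι ι 𝕜}
    {B : Matrix κ κ 𝕜} (hA : A.IsHermitian) (hB : B.IsHermitian) :
    (A ⊗ₖ (1 : Matrix κ κ 𝕜) + (1 : Matrix ι ι 𝕜) ⊗ₖ B).charpoly =
      ∏ p : ι × κ, (X - C ((hA.eigenvalues p.1 + hB.eigenvalues p.2 : ℝ) : 𝕜)) := by
  set U := (hA.eigenvectorUnitary : Matrix ι ι 𝕜)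
  set V := (hB.eigenvectorUnitary : Matrix κ κ 𝕜)
  have hU : star U * U = 1 := Unitary.star_mul_self_of_mem hA.eigenvectorUnitary.2
  have hV : star V * V = 1 := Unitary.star_mul_self_of_mem hB.eigenvectorUnitary.2
  have hU' : U * star U = 1 := Unitary.mul_star_self_of_mem hA.eigenvectorUnitary.2
  have hV' : V * star V = 1 := Unitary.mul_star_self_of_mem hB.eigenvectorUnitary.2
  have hconj : A ⊗ₖ (1 : Matrix κ κ 𝕜) + (1 : Matrix ι ι 𝕜) ⊗ₖ B =
      (U ⊗ₖ V) * diagonal (fun p : ι × κ => (hA.eigenvalues p.1 + hB.eigenvalues p.2 : 𝕜)) *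
        (star U ⊗ₖ star V) := by
    conv_lhs => rw [hA.spectral_theorem, hB.spectral_theorem]
    rw [Unitary.conjStarAlgAut_apply, Unitary.conjStarAlgAut_apply,
      ← diagonal_kronecker_one_add_one_kronecker_diagonal (fun i => (hA.eigenvalues i : 𝕜))
        (fun j => (hB.eigenvalues j : 𝕜)), mul_add, add_mul,
      ← mul_kronecker_mul, ← mul_kronecker_mul, ← mul_kronecker_mul, ← mul_kronecker_mul,
      mul_one, mul_one, hU', hV']
    rfl
  rw [hconj, charpoly_mul_comm, ← mul_assoc, ← mul_kronecker_mul, hU, hV, one_kronecker_one,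
    one_mul, charpoly_diagonal]
  simp

theorem IsHermitian.eigenvalues_kronecker_one_add_one_kronecker [RCLike 𝕜] {A : Matrix ι ι 𝕜}
    {B : Matrix κ κ 𝕜} (hA : A.IsHermitian) (hB : B.IsHermitian)
    (hAB : (A ⊗ₖ (1 : Matrix κ κ 𝕜) + (1 : Matrix ι ι 𝕜) ⊗ₖ B).IsHermitian) :
    Finset.univ.val.map hAB.eigenvalues =
      Finset.univ.val.map fun p : ι × κ => hA.eigenvalues p.1 + hB.eigenvalues p.2 := by
  apply Multiset.map_injective (RCLike.ofReal_injective (K := 𝕜))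
  rw [Multiset.map_map, ← hAB.roots_charpoly_eq_eigenvalues,
    hA.charpoly_kronecker_one_add_one_kronecker hB,
    roots_prod _ _ (monic_prod_of_monic _ _ fun p _ => monic_X_sub_C _).ne_zero]
  simp only [roots_X_sub_C, Multiset.bind_singleton, Multiset.map_map]
  rfl

end Matrix

section Kuramoto

variable {ι κ : Type*}

noncomputable def kuraWeight (C : Matrix ι ι ℝ) (θ : ι → ℝ) : Matrix ι ι ℝ :=
  of fun i j => C i j * Real.cos (θ j - θ i)

lemma kuraJac_eq_kuraWeight_sub_diagonal [Fintype ι] [DecidableEq ι] (C : Matrix ι ι ℝ)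
    (θ : ι → ℝ) :
    kuraJac C θ = kuraWeight C θ - diagonal fun i => ∑ k, kuraWeight C θ i k := by
  ext i j
  rcases eq_or_ne i j with rfl | hij
  · rw [Matrix.sub_apply, diagonal_apply_eq,
      Finset.sum_eq_sum_sdiff_singleton_add (Finset.mem_univ i)]
    simp [kuraJac, kuraWeight]
  · simp [kuraJac, kuraWeight, hij]

lemma kuraWeight_kronecker_one_add_one_kronecker [DecidableEq ι] [DecidableEq κ]
    (A : Matrix ι ι ℝ) (B : Matrix κ κ ℝ)
    {φ : ι → ℝ} {ψ : κ → ℝ} {θ : ι × κ → ℝ} (hθ : ∀ l i, θ (l, i) = φ l + ψ i) :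
    kuraWeight (A ⊗ₖ (1 : Matrix κ κ ℝ) + (1 : Matrix ι ι ℝ) ⊗ₖ B) θ =
      kuraWeight A φ ⊗ₖ (1 : Matrix κ κ ℝ) + (1 : Matrix ι ι ℝ) ⊗ₖ kuraWeight B ψ := by
  ext ⟨l, i⟩ ⟨k, j⟩
  rcases eq_or_ne i j with rfl | hij <;> rcases eq_or_ne l k with rfl | hlk <;>
    simp [kuraWeight, one_apply, *]

lemma kuraJac_kronecker_one_add_one_kronecker [Fintype ι] [DecidableEq ι] [Fintype κ]
    [DecidableEq κ] (A : Matrix ι ι ℝ) (B : Matrix κ κ ℝ)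
    {φ : ι → ℝ} {ψ : κ → ℝ} {θ : ι × κ → ℝ} (hθ : ∀ l i, θ (l, i) = φ l + ψ i) :
    kuraJac (A ⊗ₖ (1 : Matrix κ κ ℝ) + (1 : Matrix ι ι ℝ) ⊗ₖ B) θ =
      kuraJac A φ ⊗ₖ (1 : Matrix κ κ ℝ) + (1 : Matrix ι ι ℝ) ⊗ₖ kuraJac B ψ := by
  simp_rw [kuraJac_eq_kuraWeight_sub_diagonal, kuraWeight_kronecker_one_add_one_kronecker A B hθ,
    sum_kronecker_one_add_one_kronecker_apply]
  rw [← diagonal_kronecker_one_add_one_kronecker_diagonal (fun l => ∑ k, kuraWeight A φ l k)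
    (fun i => ∑ j, kuraWeight B ψ i j), sub_eq_iff_eq_add, add_add_add_comm, ← add_kronecker,
    ← kronecker_add, sub_add_cancel, sub_add_cancel]

end Kuramoto

lemma kronSum_eq_kronecker_one_add_one_kronecker {M N : ℕ} (A : Matrix (Fin M) (Fin M) ℝ)
    (B : Matrix (Fin N) (Fin N) ℝ) :
    kronSum A B = A ⊗ₖ (1 : Matrix (Fin N) (Fin N) ℝ) + (1 : Matrix (Fin M) (Fin M) ℝ) ⊗ₖ B := by
  ext ⟨l, i⟩ ⟨k, j⟩
  simp [kronSum, one_apply, mul_ite, ite_mul]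

theorem eigenvalues_multiplex_jacobian_general
    (M N : ℕ)
    (A : Matrix (Fin M) (Fin M) ℝ) (B : Matrix (Fin N) (Fin N) ℝ)
    (φ : Fin M → ℝ) (ψ : Fin N → ℝ)
    (θ : Fin M × Fin N → ℝ) (hθ : ∀ (l : Fin M) (i : Fin N), θ (l, i) = φ l + ψ i)
    (hA : (kuraJac A φ).IsHermitian) (hB : (kuraJac B ψ).IsHermitian)
    (hAB : (kuraJac (kronSum A B) θ).IsHermitian) :
    Finset.univ.val.map hAB.eigenvalues =
      Finset.univ.val.map
        (fun p : Fin M × Fin N => hA.eigenvalues p.1 + hB.eigenvalues p.2) := by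
  have hJ : kuraJac (kronSum A B) θ = kuraJac A φ ⊗ₖ (1 : Matrix (Fin N) (Fin N) ℝ) +
      (1 : Matrix (Fin M) (Fin M) ℝ) ⊗ₖ kuraJac B ψ := by
    rw [kronSum_eq_kronecker_one_add_one_kronecker, kuraJac_kronecker_one_add_one_kronecker A B hθ]
  revert hAB
  rw [hJ]
  exact hA.eigenvalues_kronecker_one_add_one_kronecker hB

theorem eigenvalues_multiplex_jacobian
    (M N : ℕ) (hM : 0 < M) (hN : 0 < N)
    (A : Matrix (Fin M) (Fin M) ℝ) (B : Matrix (Fin N) (Fin N) ℝ)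
    (hAsymm : A.IsSymm) (hBsymm : B.IsSymm)
    (φ : Fin M → ℝ) (ψ : Fin N → ℝ)
    (θ : Fin M × Fin N → ℝ) (hθ : ∀ (l : Fin M) (i : Fin N), θ (l, i) = φ l + ψ i)
    (hA : (kuraJac A φ).IsHermitian) (hB : (kuraJac B ψ).IsHermitian)
    (hAB : (kuraJac (kronSum A B) θ).IsHermitian) :
    Finset.univ.val.map hAB.eigenvalues =
      Finset.univ.val.map
        (fun p : Fin M × Fin N => hA.eigenvalues p.1 + hB.eigenvalues p.2) :=
  eigenvalues_multiplex_jacobian_general M N A B φ ψ θ hθ hA hB hAB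
end
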